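/- Let n ≥ 1, C > 0, d > 0. Then there exists K > 0, depending only on n, C and d, with the following property. Let U ⊆ ℝⁿ be open and let g : U → Mₙ(ℝ) be a C¹ map whose values are symmetric positive definite matrices, such that for all x ∈ U: |g(x) i j| ≤ C for all i, j, every first-order partial derivative of every entry of g at x has absolute value at most C, and det g(x) ≥ d. Define the Christoffel symbols Γ^r_{st}(x) = (1/2) Σ_{l=1}^{n} (g(x)⁻¹)_{rl} (∂_s g(x)_{lt} + ∂_t g(x)_{ls} − ∂_l g(x)_{st}). Let x : J → U be a C² curve on an interval J ⊆ ℝ which is a unit-speed geodesic of g, i.e. x'(t)ᵀ g(x(t)) x'(t) = 1 for all t ∈ J and x''_i(t) = − Σ_{s,t'=1}^{n} Γ^i_{st'}(x(t)) · x'_s(t) · x'_{t'}(t) for all t ∈ J and all i. Then ‖x'(t)‖ ≤ K and ‖x''(t)‖ ≤ K for all t ∈ J (Euclidean norms). -/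

import Mathlib

open Matrix

/-- The partial derivative, in the `l`-th coordinate direction, of the `(i,j)` entry of a
matrix-valued map `g` at the point `x`. -/
noncomputable def partialEntry (n : ℕ) (g : (Fin n → ℝ) → Matrix (Fin n) (Fin n) ℝ)
    (i j l : Fin n) (x : Fin n → ℝ) : ℝ :=
  fderiv ℝ (fun y => g y i j) x (Pi.single l 1)

/-- The Christoffel symbols `Γ^r_{st}` of the metric `g` at the point `x`. -/
noncomputable def christoffel (n : ℕ) (g : (Fin n → ℝ) → Matrix (Fin n) (Fin n) ℝ)
    (r s t : Fin n) (x : Fin n → ℝ) : ℝ :=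
  (1 / 2) * ∑ l, (g x)⁻¹ r l *
    (partialEntry n g l t s x + partialEntry n g l s t x - partialEntry n g s t l x)

/-!
All bounds are pointwise and algebraic. By Cramer's rule and the Leibniz bound on
determinants, the entries of `g⁻¹` are at most `B = n! · max(C, 1)ⁿ / d`. For a velocity `v`
with `vᵀ g v = 1`, Cauchy–Schwarz for the form `g`, applied to `v` and `g⁻¹ v`, gives
`|v|⁴ ≤ (vᵀ g v) (vᵀ g⁻¹ v) ≤ n B |v|²`, hence `|v|² ≤ n B`. The Christoffel symbols are then
bounded by `3nBC/2`, and the geodesic equation writes each coordinate of the acceleration as a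
quadratic form in `v` with these coefficients.
-/

theorem sum_sq_le_card_mul_sq_of_abs_le {ι : Type*} [Fintype ι] {w : ι → ℝ} {M : ℝ}
    (hw : ∀ i, |w i| ≤ M) : ∑ i, w i ^ 2 ≤ Fintype.card ι * M ^ 2 := by
  calc ∑ i, w i ^ 2 ≤ ∑ _i : ι, M ^ 2 :=
        Finset.sum_le_sum fun i _ => sq_le_sq' (abs_le.mp (hw i)).1 (abs_le.mp (hw i)).2
    _ = Fintype.card ι * M ^ 2 := by simp

namespace Matrix

variable {ι : Type*} [Fintype ι]

theorem dotProduct_of_mulVec_self (M : ι → ι → ℝ) (v : ι → ℝ) :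
    v ⬝ᵥ of M *ᵥ v = ∑ s, ∑ t, M s t * v s * v t := by
  simp only [dotProduct, mulVec, of_apply, Finset.mul_sum]
  exact Finset.sum_congr rfl fun s _ => Finset.sum_congr rfl fun t _ => by ring

theorem PosSemidef.dotProduct_mulVec_sq_le {M : Matrix ι ι ℝ} (hM : M.PosSemidef)
    (x y : ι → ℝ) : (x ⬝ᵥ M *ᵥ y) ^ 2 ≤ (x ⬝ᵥ M *ᵥ x) * (y ⬝ᵥ M *ᵥ y) := by
  classical
  have hsymm : (toLinearMap₂' ℝ M).IsSymm := ⟨fun x y => by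
    rw [RingHom.id_apply, toLinearMap₂'_apply', toLinearMap₂'_apply', dotProduct_mulVec,
      ← mulVec_transpose, dotProduct_comm, ← conjTranspose_eq_transpose_of_trivial,
      hM.isHermitian.eq]⟩
  have hnonneg (x : ι → ℝ) : 0 ≤ toLinearMap₂' ℝ M x x := by
    simpa only [toLinearMap₂'_apply', star_trivial] using hM.dotProduct_mulVec_nonneg x
  simpa only [toLinearMap₂'_apply'] using
    LinearMap.BilinForm.apply_sq_le_of_symm _ hnonneg hsymm x y

theorem abs_dotProduct_mulVec_self_le {M : Matrix ι ι ℝ} {B : ℝ} (hM : ∀ i j, |M i j| ≤ B)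
    (v : ι → ℝ) : |v ⬝ᵥ M *ᵥ v| ≤ Fintype.card ι * B * ∑ i, v i ^ 2 := by
  rcases isEmpty_or_nonempty ι with hι | ⟨⟨i₀⟩⟩
  · simp
  have hB : 0 ≤ B := (abs_nonneg _).trans (hM i₀ i₀)
  calc |v ⬝ᵥ M *ᵥ v| ≤ ∑ i, ∑ j, |v i| * B * |v j| := by
        simp only [dotProduct, mulVec, Finset.mul_sum]
        refine (Finset.abs_sum_le_sum_abs _ _).trans (Finset.sum_le_sum fun i _ => ?_)
        refine (Finset.abs_sum_le_sum_abs _ _).trans (Finset.sum_le_sum fun j _ => ?_)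
        rw [abs_mul, abs_mul, mul_assoc]
        gcongr
        exact hM i j
    _ = B * (∑ i, |v i|) ^ 2 := by
        rw [sq, Finset.sum_mul_sum, Finset.mul_sum]
        exact Finset.sum_congr rfl fun i _ => by rw [Finset.mul_sum]; ring_nf
    _ ≤ B * (Fintype.card ι * ∑ i, v i ^ 2) := by
        gcongr
        simpa only [sq_abs, Finset.card_univ] using
          sq_sum_le_card_mul_sum_sq (s := Finset.univ) (f := fun i => |v i|)
    _ = Fintype.card ι * B * ∑ i, v i ^ 2 := by ring

variable [DecidableEq ι]

theorem abs_inv_apply_le_of_le_det {A : Matrix ι ι ℝ} {C d : ℝ} (hA : ∀ i j, |A i j| ≤ C)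
    (hd : 0 < d) (hdet : d ≤ A.det) (i j : ι) :
    |A⁻¹ i j| ≤ (Fintype.card ι).factorial * max C 1 ^ Fintype.card ι / d := by
  have hadj : |A.adjugate i j| ≤ (Fintype.card ι).factorial * max C 1 ^ Fintype.card ι := by
    rw [adjugate_apply, ← nsmul_eq_mul]
    refine det_le (abv := AbsoluteValue.abs) fun k l => ?_
    rcases eq_or_ne k j with rfl | hk
    · rw [updateRow_self, Pi.single_apply]
      split_ifs <;> simp
    · rw [updateRow_ne hk]
      exact (hA k l).trans (le_max_left _ _)
  rw [inv_def, smul_apply, Ring.inverse_eq_inv, smul_eq_mul, abs_mul, abs_inv,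
    abs_of_pos (hd.trans_le hdet), inv_mul_eq_div]
  exact div_le_div₀ (by positivity) hadj hd hdet

theorem PosDef.sum_sq_le_of_dotProduct_mulVec_self_eq_one {G : Matrix ι ι ℝ} (hG : G.PosDef)
    {B : ℝ} (hinv : ∀ i j, |G⁻¹ i j| ≤ B) {v : ι → ℝ} (hv : v ⬝ᵥ G *ᵥ v = 1) :
    ∑ i, v i ^ 2 ≤ Fintype.card ι * B := by
  set E := ∑ i, v i ^ 2
  have hE : v ⬝ᵥ v = E := by simp only [dotProduct, E, sq]
  have hE₀ : 0 < E := by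
    refine hE ▸ (Finset.sum_nonneg fun i _ => mul_self_nonneg (v i)).lt_of_ne' fun h => ?_
    rw [dotProduct_self_eq_zero.mp h] at hv
    simp at hv
  have hGG : G * G⁻¹ = 1 := mul_nonsing_inv G ((isUnit_iff_isUnit_det G).mp hG.isUnit)
  have hcs := hG.posSemidef.dotProduct_mulVec_sq_le v (G⁻¹ *ᵥ v)
  rw [mulVec_mulVec, hGG, one_mulVec, hE, hv, one_mul, dotProduct_comm] at hcs
  have hE_sq : E * E ≤ Fintype.card ι * B * E := by
    nlinarith [le_abs_self (v ⬝ᵥ G⁻¹ *ᵥ v), abs_dotProduct_mulVec_self_le hinv v]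
  exact le_of_mul_le_mul_right hE_sq hE₀

end Matrix

theorem abs_christoffel_le {n : ℕ} {g : (Fin n → ℝ) → Matrix (Fin n) (Fin n) ℝ}
    {x : Fin n → ℝ} {B C : ℝ} (hinv : ∀ r l, |(g x)⁻¹ r l| ≤ B)
    (hdg : ∀ i j l, |partialEntry n g i j l x| ≤ C) (r s t : Fin n) :
    |christoffel n g r s t x| ≤ 3 / 2 * n * B * C := by
  have hB : 0 ≤ B := (abs_nonneg _).trans (hinv r r)
  rw [christoffel, abs_mul, abs_of_pos one_half_pos]
  calc 1 / 2 * |∑ l, (g x)⁻¹ r l *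
        (partialEntry n g l t s x + partialEntry n g l s t x - partialEntry n g s t l x)|
      ≤ 1 / 2 * ∑ _l : Fin n, B * (3 * C) := by
        gcongr
        refine (Finset.abs_sum_le_sum_abs _ _).trans (Finset.sum_le_sum fun l _ => ?_)
        rw [abs_mul]
        refine mul_le_mul (hinv r l) ?_ (abs_nonneg _) hB
        have h₁ := abs_le.mp (hdg l t s)
        have h₂ := abs_le.mp (hdg l s t)
        have h₃ := abs_le.mp (hdg s t l)
        exact abs_le.mpr ⟨by linarith, by linarith⟩
    _ = 3 / 2 * n * B * C := by simp; ring

theorem geodesic_derivatives_bound_general (n : ℕ) (C d : ℝ) (hC : 0 < C) (hd : 0 < d) :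
    ∃ K : ℝ, 0 < K ∧
      ∀ (U : Set (Fin n → ℝ)), IsOpen U →
      ∀ (g : (Fin n → ℝ) → Matrix (Fin n) (Fin n) ℝ),
        (∀ i j, ContDiffOn ℝ 1 (fun y => g y i j) U) →
        (∀ x ∈ U, (g x).IsSymm) → (∀ x ∈ U, (g x).PosDef) →
        (∀ x ∈ U, ∀ i j, |g x i j| ≤ C) →
        (∀ x ∈ U, ∀ i j l, |partialEntry n g i j l x| ≤ C) →
        (∀ x ∈ U, d ≤ (g x).det) →
      ∀ (J : Set ℝ), J.OrdConnected →
      ∀ (c : ℝ → Fin n → ℝ),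
        (∀ t ∈ J, c t ∈ U) →
        (∀ t ∈ J, DifferentiableAt ℝ c t) →
        (∀ t ∈ J, DifferentiableAt ℝ (deriv c) t) →
        (∀ t ∈ J, deriv c t ⬝ᵥ (g (c t)).mulVec (deriv c t) = 1) →
        (∀ t ∈ J, ∀ i, deriv (deriv c) t i =
          - ∑ s, ∑ t', christoffel n g i s t' (c t) * deriv c t s * deriv c t t') →
      ∀ t ∈ J,
        Real.sqrt (∑ i, (deriv c t i) ^ 2) ≤ K ∧
        Real.sqrt (∑ i, (deriv (deriv c) t i) ^ 2) ≤ K := by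
  set B : ℝ := n.factorial * max C 1 ^ n / d
  have hB : 0 ≤ B := div_nonneg (by positivity) hd.le
  set A : ℝ := n * (3 / 2 * n * B * C) * (n * B)
  refine ⟨max √(n * B) √(n * A ^ 2) + 1, by positivity, ?_⟩
  intro U _ g _ _ hpd hg hdg hdet J _ c hcU _ _ hunit hgeo t ht
  have hx := hcU t ht
  have hinv : ∀ i j, |(g (c t))⁻¹ i j| ≤ B := by
    simpa only [Fintype.card_fin] using abs_inv_apply_le_of_le_det (hg _ hx) hd (hdet _ hx)
  have hspeed : ∑ i, deriv c t i ^ 2 ≤ n * B := by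
    simpa only [Fintype.card_fin] using
      (hpd _ hx).sum_sq_le_of_dotProduct_mulVec_self_eq_one hinv (hunit t ht)
  have haccel (i : Fin n) : |deriv (deriv c) t i| ≤ A := by
    rw [hgeo t ht i, abs_neg,
      ← dotProduct_of_mulVec_self fun s t' => christoffel n g i s t' (c t)]
    refine (abs_dotProduct_mulVec_self_le (abs_christoffel_le hinv (hdg _ hx) i) _).trans ?_
    rw [Fintype.card_fin]
    exact mul_le_mul_of_nonneg_left hspeed (by positivity)
  have hK_le {a b : ℝ} : a ≤ max a b + 1 ∧ b ≤ max a b + 1 :=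
    ⟨by linarith [le_max_left a b], by linarith [le_max_right a b]⟩
  constructor
  · exact (Real.sqrt_le_sqrt hspeed).trans hK_le.1
  · refine (Real.sqrt_le_sqrt ?_).trans hK_le.2
    simpa only [Fintype.card_fin] using sum_sq_le_card_mul_sq_of_abs_le haccel

/-- Proposition 1.4 of the paper, case `k = 1`: there is a constant `K = K(n, C, d) > 0`
such that for every `C¹` Riemannian metric `g` on an open set `U ⊆ ℝⁿ` whose entries and
first partial derivatives of entries are bounded by `C` and whose determinant is at least
`d > 0`, every unit-speed geodesic `c` of `g` defined on an interval `J` satisfies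
`‖c'(t)‖ ≤ K` and `‖c''(t)‖ ≤ K` (Euclidean norms) for all `t ∈ J`. -/
theorem geodesic_derivatives_bound (n : ℕ) (hn : 1 ≤ n) (C d : ℝ) (hC : 0 < C) (hd : 0 < d) :
    ∃ K : ℝ, 0 < K ∧
      ∀ (U : Set (Fin n → ℝ)), IsOpen U →
      ∀ (g : (Fin n → ℝ) → Matrix (Fin n) (Fin n) ℝ),
        (∀ i j, ContDiffOn ℝ 1 (fun y => g y i j) U) →
        (∀ x ∈ U, (g x).IsSymm) → (∀ x ∈ U, (g x).PosDef) →
        (∀ x ∈ U, ∀ i j, |g x i j| ≤ C) →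
        (∀ x ∈ U, ∀ i j l, |partialEntry n g i j l x| ≤ C) →
        (∀ x ∈ U, d ≤ (g x).det) →
      ∀ (J : Set ℝ), J.OrdConnected →
      ∀ (c : ℝ → Fin n → ℝ),
        (∀ t ∈ J, c t ∈ U) →
        (∀ t ∈ J, DifferentiableAt ℝ c t) →
        (∀ t ∈ J, DifferentiableAt ℝ (deriv c) t) →
        (∀ t ∈ J, deriv c t ⬝ᵥ (g (c t)).mulVec (deriv c t) = 1) →
        (∀ t ∈ J, ∀ i, deriv (deriv c) t i =
          - ∑ s, ∑ t', christoffel n g i s t' (c t) * deriv c t s * deriv c t t') →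
      ∀ t ∈ J,
        Real.sqrt (∑ i, (deriv c t i) ^ 2) ≤ K ∧
        Real.sqrt (∑ i, (deriv (deriv c) t i) ^ 2) ≤ K :=
  geodesic_derivatives_bound_general n C d hC hd
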